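/- The dimensions of the isotypic components of the adjoint representation of U(m) on the n-photon operator space sum to the square of the Fock dimension: Σ_{k=0}^{n} ((2k+m-1)/(m-1)) · C(k+m-2, k)² = C(n+m-1, n)². -/

import Mathlib

open Finset in
/-- Dimensions of the isotypic components of the adjoint representation sum to the
square of the Fock space dimension:
Σ_{k=0}^{n} ((2k+m-1)/(m-1)) · C(k+m-2,k)² = C(n+m-1,n)². -/
theorem isotypic_dimensions_sum (m n : ℕ) (hm : 2 ≤ m) :
    ∑ k ∈ Finset.range (n + 1),
        ((2 * (k : ℝ) + m - 1) / ((m : ℝ) - 1)) * ((k + m - 2).choose k : ℝ) ^ 2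
      = (((n + m - 1).choose n : ℝ)) ^ 2 := by
  have hm2 : (2:ℝ) ≤ m := by exact_mod_cast hm
  have hm1 : (m:ℝ) - 1 ≠ 0 := by linarith
  induction n with
  | zero =>
    simp [Finset.sum_range_one]
    field_simp
    exact hm1
  | succ n ih =>
    rw [Finset.sum_range_succ, ih]
    have h1 : (n + 1 + m - 2) = n + m - 1 := by omega
    have h2 : (n + 1 + m - 1) = n + m := by omega
    have h3 : (n + m).choose (n + 1)
        = (n + m - 1).choose n + (n + m - 1).choose (n + 1) := by
      have h : n + m = (n + m - 1) + 1 := by omega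
      rw [h, Nat.choose_succ_succ]
      simp
    have h4 : (n + m - 1).choose (n + 1) * (n + 1) = (n + m - 1).choose n * (m - 1) := by
      have := Nat.choose_succ_right_eq (n + m - 1) n
      have hd : n + m - 1 - n = m - 1 := by omega
      rw [hd] at this
      exact this
    have h4' : ((n + m - 1).choose (n + 1) : ℝ) * (n + 1)
        = ((n + m - 1).choose n : ℝ) * ((m : ℝ) - 1) := by
      have := congrArg (Nat.cast : ℕ → ℝ) h4
      push_cast [Nat.cast_sub (by omega : 1 ≤ m)] at this
      linarith [this]
    rw [h1, h2, h3]
    push_cast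
    set a := ((n + m - 1).choose n : ℝ)
    set b := ((n + m - 1).choose (n + 1) : ℝ)
    field_simp
    linear_combination (2*b) * h4'
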